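/- arXiv:math/0609691 — 6 statements merged into one kernel-verified Lean document; each statement's English description precedes it below -/
import Mathlib

section
/- Let n ≥ 1, let E be the n-dimensional Euclidean space and let Cl be the Clifford algebra of the quadratic form Q(v) = −‖v‖² on E, with canonical embedding ι : E → Cl. Fix an element Φ₀ ∈ Cl and a real number σ with σ·σ = 1, set f(x) = 2/(1+‖x‖²), and define ψ : E → Cl by ψ(x) = f(x)^{n/2} • ((1 − σ • ι(x)) · Φ₀) (real power of the positive scalar f(x)). Then ψ is differentiable and for every x ∈ E it satisfies the Killing-type equation Σ_{i=1}^{n} ι(e_i) · (fderiv ℝ ψ x)(e_i) = (σ·(n/2)·f(x)) • ψ(x), where (e_i) is the standard orthonormal basis of E. -/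
/-!
Write `ψ = g • φ` with `g = f ^ (n/2)` and `φ y = (1 - σ γ y) Φ₀`, where `γ = θ ∘ ι` satisfies
`γ v * γ v = -‖v‖²`. The Dirac operator obeys the Leibniz rule `D(g φ) = γ(∇g) φ + g Dφ`.
Since `φ` is affine, `Dφ = -σ ∑ γ(eᵢ)² Φ₀ = σ n Φ₀`; and `∇(f ^ r) = -r f f ^ r x`, so that
`γ(∇g) φ = -r f g (γ x + σ‖x‖²) Φ₀`. The sum equals `σ r f ψ` because `f (1 + ‖x‖²) = 2 = n / r`
and `σ² = 1`.
-/

open Module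

noncomputable section

section ConformalFactor

variable {V : Type*} [NormedAddCommGroup V]

def conformalFactor (x : V) : ℝ := 2 / (1 + ‖x‖ ^ 2)

theorem conformalFactor_mul_one_add_norm_sq (x : V) :
    conformalFactor x * (1 + ‖x‖ ^ 2) = 2 := by
  rw [conformalFactor]; field_simp

theorem conformalFactor_rpow (x : V) (r : ℝ) :
    conformalFactor x ^ r = 2 ^ r * (1 + ‖x‖ ^ 2) ^ (-r) := by
  have hpos : 0 < 1 + ‖x‖ ^ 2 := by positivity
  rw [conformalFactor, Real.div_rpow zero_le_two hpos.le, Real.rpow_neg hpos.le, div_eq_mul_inv]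

theorem hasFDerivAt_conformalFactor_rpow [InnerProductSpace ℝ V] (x : V) (r : ℝ) :
    HasFDerivAt (fun y => conformalFactor y ^ r)
      (-(r * conformalFactor x * conformalFactor x ^ r) • innerSL ℝ x) x := by
  have hpos : 0 < 1 + ‖x‖ ^ 2 := by positivity
  have h := (((hasStrictFDerivAt_norm_sq x).hasFDerivAt.const_add 1).rpow_const (p := -r)
    (Or.inl hpos.ne')).const_mul (2 ^ r)
  simp only [← conformalFactor_rpow] at h
  refine h.congr_fderiv ?_
  ext v
  rw [conformalFactor_rpow]
  simp [Real.rpow_sub_one hpos.ne', conformalFactor]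
  field_simp

end ConformalFactor

variable {V : Type*} [NormedAddCommGroup V] [InnerProductSpace ℝ V]
  {D : Type*} [NormedRing D] [NormedAlgebra ℝ D] {ι : Type*} [Fintype ι]

def dirac (b : OrthonormalBasis ι ℝ V) (γ : V → D) (φ : V → D) (x : V) : D :=
  ∑ i, γ (b i) * fderiv ℝ φ x (b i)

theorem dirac_smul {b : OrthonormalBasis ι ℝ V} {γ : V → D} {g : V → ℝ} {φ : V → D}
    {g' : V →L[ℝ] ℝ} {x : V} (hg : HasFDerivAt g g' x)
    (hφ : DifferentiableAt ℝ φ x) :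
    dirac b γ (fun y => g y • φ y) x =
      g x • dirac b γ φ x + (∑ i, g' (b i) • γ (b i)) * φ x := by
  simp only [dirac, (hg.fun_smul hφ.hasFDerivAt).fderiv, add_apply,
    smul_apply, ContinuousLinearMap.smulRight_apply, mul_add,
    Finset.sum_add_distrib, Finset.smul_sum, Finset.sum_mul, mul_smul_comm, smul_mul_assoc]

theorem OrthonormalBasis.sum_inner_smul_map (b : OrthonormalBasis ι ℝ V) (γ : V →L[ℝ] D)
    (x : V) : ∑ i, inner ℝ x (b i) • γ (b i) = γ x := by
  conv_rhs => rw [← b.sum_repr' x]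
  simp [map_sum, real_inner_comm]

theorem mul_mul_eq_neg_norm_sq_smul {γ : V →L[ℝ] D}
    (hγ : ∀ v, γ v * γ v = algebraMap ℝ D (-‖v‖ ^ 2)) (v : V) (P : D) :
    γ v * (γ v * P) = -(‖v‖ ^ 2) • P := by
  rw [← mul_assoc, hγ, ← Algebra.smul_def]

theorem dirac_one_sub_smul_mul (b : OrthonormalBasis ι ℝ V) {γ : V →L[ℝ] D}
    (hγ : ∀ v, γ v * γ v = algebraMap ℝ D (-‖v‖ ^ 2)) (σ : ℝ) (P : D) (x : V) :
    dirac b γ (fun y => (1 - σ • γ y) * P) x = (σ * Fintype.card ι) • P := by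
  have hd : HasFDerivAt (fun y => (1 - σ • γ y) * P) (MulOpposite.op P • (0 - σ • γ)) x :=
    ((hasFDerivAt_const 1 x).sub (γ.hasFDerivAt.const_smul σ)).mul_const' P
  simp only [dirac, hd.fderiv, zero_sub, smul_neg, neg_apply, smul_apply,
    MulOpposite.smul_eq_mul_unop, MulOpposite.unop_op, smul_mul_assoc, mul_neg, mul_smul_comm,
    mul_mul_eq_neg_norm_sq_smul hγ, b.norm_eq_one, one_pow, neg_smul, one_smul, neg_neg,
    Finset.sum_const, Finset.card_univ, nsmul_eq_mul]
  rw [mul_smul, Nat.cast_smul_eq_nsmul, nsmul_eq_mul]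

def testSpinor (γ : V →L[ℝ] D) (σ : ℝ) (P : D) (x : V) : D :=
  conformalFactor x ^ ((finrank ℝ V : ℝ) / 2) • ((1 - σ • γ x) * P)

theorem differentiable_testSpinor (γ : V →L[ℝ] D) (σ : ℝ) (P : D) :
    Differentiable ℝ (testSpinor γ σ P) := fun x =>
  (hasFDerivAt_conformalFactor_rpow x _).differentiableAt.smul (by fun_prop)

theorem dirac_testSpinor (b : OrthonormalBasis ι ℝ V) {γ : V →L[ℝ] D}
    (hγ : ∀ v, γ v * γ v = algebraMap ℝ D (-‖v‖ ^ 2)) {σ : ℝ} (hσ : σ * σ = 1) (P : D)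
    (x : V) :
    dirac b γ (testSpinor γ σ P) x =
      (σ * ((finrank ℝ V : ℝ) / 2) * conformalFactor x) • testSpinor γ σ P x := by
  unfold testSpinor
  set r : ℝ := (finrank ℝ V : ℝ) / 2
  have hcard : (Fintype.card ι : ℝ) = 2 * r := by
    rw [← finrank_eq_card_basis b.toBasis]; ring
  have hf := conformalFactor_mul_one_add_norm_sq x
  rw [dirac_smul (hasFDerivAt_conformalFactor_rpow x r) (by fun_prop),
    dirac_one_sub_smul_mul b hγ]
  have hsum : ∀ c : ℝ, ∑ i, (c • innerSL ℝ x) (b i) • γ (b i) = c • γ x := fun c => by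
    simp only [smul_apply, innerSL_apply_apply, smul_eq_mul, mul_smul, ← Finset.smul_sum,
      b.sum_inner_smul_map]
  rw [hsum, smul_mul_assoc, sub_mul, one_mul, smul_mul_assoc, mul_sub, mul_smul_comm,
    mul_mul_eq_neg_norm_sq_smul hγ]
  match_scalars
  · linear_combination (conformalFactor x ^ r * σ) * hcard - (conformalFactor x ^ r * σ * r) * hf
  · linear_combination (r * conformalFactor x * conformalFactor x ^ r) * hσ

end

theorem killing_spinor_eqn_halfspace_general (n : ℕ)
    (Q : QuadraticForm ℝ (EuclideanSpace ℝ (Fin n)))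
    (hQ : ∀ v : EuclideanSpace ℝ (Fin n), Q v = -‖v‖ ^ 2)
    (D : Type*) [NormedRing D] [NormedAlgebra ℝ D]
    (θ : CliffordAlgebra Q ≃ₐ[ℝ] D)
    (Φ₀ : CliffordAlgebra Q) (σ : ℝ) (hσ : σ * σ = 1)
    (f : EuclideanSpace ℝ (Fin n) → ℝ)
    (hf : ∀ x : EuclideanSpace ℝ (Fin n), f x = 2 / (1 + ‖x‖ ^ 2))
    (ψ : EuclideanSpace ℝ (Fin n) → D)
    (hψ : ∀ x : EuclideanSpace ℝ (Fin n),
      ψ x = f x ^ ((n : ℝ) / 2) • θ ((1 - σ • CliffordAlgebra.ι Q x) * Φ₀)) :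
    Differentiable ℝ ψ ∧
      ∀ x : EuclideanSpace ℝ (Fin n),
        ∑ i : Fin n,
            θ (CliffordAlgebra.ι Q (EuclideanSpace.single i 1)) *
              fderiv ℝ ψ x (EuclideanSpace.single i 1)
          = (σ * ((n : ℝ) / 2) * f x) • ψ x := by
  let γ : EuclideanSpace ℝ (Fin n) →L[ℝ] D :=
    (θ.toLinearMap ∘ₗ CliffordAlgebra.ι Q).toContinuousLinearMap
  have hγ : ∀ v, γ v * γ v = algebraMap ℝ D (-‖v‖ ^ 2) := fun v => by
    simp [γ, ← map_mul, CliffordAlgebra.ι_sq_scalar, hQ]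
  obtain rfl : f = conformalFactor := funext hf
  obtain rfl : ψ = testSpinor γ σ (θ Φ₀) := by
    ext x
    simp [hψ, testSpinor, γ]
  refine ⟨differentiable_testSpinor γ σ (θ Φ₀), fun x => ?_⟩
  simpa [dirac, γ, finrank_euclideanSpace_fin] using
    dirac_testSpinor (EuclideanSpace.basisFun (Fin n) ℝ) hγ hσ (θ Φ₀) x

/-- **Killing-type equation for the test spinor on Euclidean space.**
Let `E` be `n`-dimensional Euclidean space, `Cl` the Clifford algebra of the quadratic
form `Q v = -‖v‖²` on `E` (realized, in order to speak of differentiability, inside an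
arbitrary normed `ℝ`-algebra `D` via an algebra isomorphism `θ`).  For `Φ₀ ∈ Cl`, `σ = ±1`,
`f x = 2/(1+‖x‖²)` and `ψ x = f x ^ (n/2) • ((1 - σ • ι x) * Φ₀)`, the spinor `ψ` is
differentiable and satisfies the Killing-type (Dirac eigen-)equation
`∑ i, ι eᵢ * ∂ᵢ ψ = (σ · (n/2) · f) • ψ`. -/
theorem killing_spinor_eqn_halfspace (n : ℕ) (hn : 1 ≤ n)
    (Q : QuadraticForm ℝ (EuclideanSpace ℝ (Fin n)))
    (hQ : ∀ v : EuclideanSpace ℝ (Fin n), Q v = -‖v‖ ^ 2)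
    (D : Type*) [NormedRing D] [NormedAlgebra ℝ D]
    (θ : CliffordAlgebra Q ≃ₐ[ℝ] D)
    (Φ₀ : CliffordAlgebra Q) (σ : ℝ) (hσ : σ * σ = 1)
    (f : EuclideanSpace ℝ (Fin n) → ℝ)
    (hf : ∀ x : EuclideanSpace ℝ (Fin n), f x = 2 / (1 + ‖x‖ ^ 2))
    (ψ : EuclideanSpace ℝ (Fin n) → D)
    (hψ : ∀ x : EuclideanSpace ℝ (Fin n),
      ψ x = f x ^ ((n : ℝ) / 2) • θ ((1 - σ • CliffordAlgebra.ι Q x) * Φ₀)) :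
    Differentiable ℝ ψ ∧
      ∀ x : EuclideanSpace ℝ (Fin n),
        ∑ i : Fin n,
            θ (CliffordAlgebra.ι Q (EuclideanSpace.single i 1)) *
              fderiv ℝ ψ x (EuclideanSpace.single i 1)
          = (σ * ((n : ℝ) / 2) * f x) • ψ x :=
  killing_spinor_eqn_halfspace_general n Q hQ D θ Φ₀ σ hσ f hf ψ hψ
end

section
/- Let (α, μ) be a measure space and n ≥ 1 a natural number. Let φ : α → [0,∞) and f : α → [0,∞) be measurable and assume 0 < ∫⁻ φ^{2n/(n+1)} dμ < ∞ and ∫⁻ fⁿ dμ < ∞. If equality holds in the Hölder-type inequality, i.e. (∫⁻ φ^{2n/(n+1)} dμ)^{(n+1)/n} = (∫⁻ φ²/f dμ) · (∫⁻ fⁿ dμ)^{1/n}, then there exists a constant c > 0 such that f = c·φ^{2/(n+1)} almost everywhere with respect to μ. -/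
/-!
With `g = φ² / f` and `h = fⁿ`, the integrand `φ^(2n/(n+1))` is `g^(n/(n+1)) · h^(1/(n+1))`
(where `f = 0`, finiteness of `∫⁻ g` forces `φ = 0` a.e.), and the hypothesis becomes
`∫⁻ g^(n/(n+1)) h^(1/(n+1)) = (∫⁻ g)^(n/(n+1)) (∫⁻ h)^(1/(n+1))`: equality in Hölder's inequality
for the exponents `(n+1)/n` and `n+1`. Integrating Young's inequality for the normalized functions
gives `1 ≤ 1`, so Young's inequality is an equality a.e., which forces `g / ∫⁻ g = h / ∫⁻ h` a.e.
Hence `f^(n+1)` is a constant multiple of `φ²`.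
-/

open MeasureTheory ENNReal

namespace ENNReal

variable {α : Type*} [MeasurableSpace α] {μ : Measure α}

theorem div_mul_cancel_of_div_ne_top {a b : ℝ≥0∞} (hb : b ≠ ⊤) (hab : a / b ≠ ⊤) :
    a / b * b = a := by
  rcases eq_or_ne b 0 with rfl | hb0
  · obtain rfl : a = 0 := not_imp_comm.1 ENNReal.div_zero hab
    simp
  · exact ENNReal.div_mul_cancel hb0 hb

theorem div_rpow_mul_rpow_of_div_ne_top {a b : ℝ≥0∞} {t : ℝ} (ht : 0 ≤ t) (hb : b ≠ ⊤)
    (hab : a / b ≠ ⊤) : (a / b) ^ t * b ^ t = a ^ t := by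
  rw [← mul_rpow_of_nonneg _ _ ht, div_mul_cancel_of_div_ne_top hb hab]

theorem ae_rpow_eq_of_lintegral_mul_eq_one {p q : ℝ} (hpq : p.HolderConjugate q)
    {f g : α → ℝ≥0∞} (hf : AEMeasurable f μ) (hg : AEMeasurable g μ)
    (hf_norm : ∫⁻ a, f a ^ p ∂μ = 1) (hg_norm : ∫⁻ a, g a ^ q ∂μ = 1)
    (hfg : ∫⁻ a, f a * g a ∂μ = 1) : ∀ᵐ a ∂μ, f a ^ p = g a ^ q := by
  set young : α → ℝ≥0∞ := fun a ↦ f a ^ p / .ofReal p + g a ^ q / .ofReal q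
  have hyoung_meas : AEMeasurable young μ :=
    ((hf.pow_const p).div_const _).add ((hg.pow_const q).div_const _)
  have hyoung_int : ∫⁻ a, young a ∂μ = 1 := by
    simp only [young, div_eq_mul_inv]
    rw [lintegral_add_left' ((hf.pow_const p).mul_const _),
      lintegral_mul_const'' _ (hf.pow_const p),
      lintegral_mul_const'' _ (hg.pow_const q),
      hf_norm, hg_norm, one_mul, one_mul, hpq.inv_add_inv_ennreal]
  have hyoung_eq : (fun a ↦ f a * g a) =ᵐ[μ] young :=
    ae_eq_of_ae_le_of_lintegral_le (ae_of_all _ fun a ↦ young_inequality (f a) (g a) hpq)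
      (by rw [hfg]; exact one_ne_top) hyoung_meas (by rw [hfg, hyoung_int])
  have hf_fin : ∀ᵐ a ∂μ, f a ^ p < ⊤ :=
    ae_lt_top' (hf.pow_const p) (by rw [hf_norm]; exact one_ne_top)
  have hg_fin : ∀ᵐ a ∂μ, g a ^ q < ⊤ :=
    ae_lt_top' (hg.pow_const q) (by rw [hg_norm]; exact one_ne_top)
  filter_upwards [hyoung_eq, hf_fin, hg_fin] with a ha hfa hga
  rcases (young_inequality_eq_iff (f a) (g a) hpq).1 ha with ⟨hfa_top, -⟩ | ⟨-, hga_top⟩ | h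
  · simp [hfa_top, hpq.pos] at hfa
  · simp [hga_top, hpq.symm.pos] at hga
  · exact h

theorem ae_div_lintegral_eq_of_lintegral_rpow_mul_rpow_eq {s t : ℝ} (hs : 0 < s) (ht : 0 < t)
    (hst : s + t = 1) {f g : α → ℝ≥0∞} (hf : AEMeasurable f μ) (hg : AEMeasurable g μ)
    (hf0 : ∫⁻ x, f x ∂μ ≠ 0) (hf_top : ∫⁻ x, f x ∂μ ≠ ⊤)
    (hg0 : ∫⁻ x, g x ∂μ ≠ 0) (hg_top : ∫⁻ x, g x ∂μ ≠ ⊤)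
    (h : ∫⁻ x, f x ^ s * g x ^ t ∂μ = (∫⁻ x, f x ∂μ) ^ s * (∫⁻ x, g x ∂μ) ^ t) :
    ∀ᵐ x ∂μ, f x / ∫⁻ y, f y ∂μ = g x / ∫⁻ y, g y ∂μ := by
  set F := ∫⁻ x, f x ∂μ
  set G := ∫⁻ x, g x ∂μ
  have hnormalized := ae_rpow_eq_of_lintegral_mul_eq_one (.inv_inv hs ht hst)
    (f := fun x ↦ (f x / F) ^ s) (g := fun x ↦ (g x / G) ^ t) (by fun_prop) (by fun_prop) ?_ ?_ ?_
  · simpa only [rpow_rpow_inv hs.ne', rpow_rpow_inv ht.ne'] using hnormalized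
  · simp_rw [rpow_rpow_inv hs.ne', div_eq_mul_inv]
    rw [lintegral_mul_const'' _ hf, ENNReal.mul_inv_cancel hf0 hf_top]
  · simp_rw [rpow_rpow_inv ht.ne', div_eq_mul_inv]
    rw [lintegral_mul_const'' _ hg, ENNReal.mul_inv_cancel hg0 hg_top]
  · have hFG0 : F ^ s * G ^ t ≠ 0 := by positivity
    have hFG_top : F ^ s * G ^ t ≠ ⊤ := by finiteness
    have hpt (x : α) :
        (f x / F) ^ s * (g x / G) ^ t = f x ^ s * g x ^ t * (F ^ s * G ^ t)⁻¹ := by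
      rw [div_rpow_of_nonneg _ _ hs.le, div_rpow_of_nonneg _ _ ht.le, div_eq_mul_inv,
        div_eq_mul_inv, ENNReal.mul_inv (by left; positivity) (by left; finiteness)]
      ring
    simp_rw [hpt]
    rw [lintegral_mul_const'' _ (by fun_prop), h, ENNReal.mul_inv_cancel hFG0 hFG_top]

theorem ne_zero_and_ne_top_of_rpow_eq_mul_rpow {A G H : ℝ≥0∞} {r s : ℝ} (hr : 0 ≤ r)
    (hs : 0 < s) (hA0 : A ≠ 0) (hA : A ≠ ⊤) (hH : H ≠ ⊤) (h : A ^ r = G * H ^ s) :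
    G ≠ 0 ∧ G ≠ ⊤ ∧ H ≠ 0 := by
  have hAr0 : G * H ^ s ≠ 0 := h ▸ (rpow_pos_of_nonneg (pos_iff_ne_zero.2 hA0) hr).ne'
  have hAr_top : G * H ^ s ≠ ⊤ := h ▸ rpow_ne_top_of_nonneg hr hA
  have hH0 : H ≠ 0 := fun hH0 ↦ hAr0 (by simp [hH0, hs])
  refine ⟨left_ne_zero_of_mul hAr0, fun hG ↦ hAr_top ?_, hH0⟩
  rw [hG, top_mul (rpow_pos (pos_iff_ne_zero.2 hH0) hH).ne']

theorem eq_rpow_mul_rpow_of_rpow_add_one_div_eq {A G H : ℝ≥0∞} {n : ℝ} (hn : 0 < n)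
    (h : A ^ ((n + 1) / n) = G * H ^ (1 / n)) : A = G ^ (n / (n + 1)) * H ^ (1 / (n + 1)) := by
  have := congrArg (· ^ (n / (n + 1))) h
  simp only [← rpow_mul, mul_rpow_of_nonneg _ _ (by positivity : 0 ≤ n / (n + 1))] at this
  rwa [show (n + 1) / n * (n / (n + 1)) = 1 by field_simp, rpow_one,
    show 1 / n * (n / (n + 1)) = 1 / (n + 1) by field_simp] at this

theorem rpow_two_div_rpow_mul_rpow_rpow {a b : ℝ≥0∞} {n : ℝ} (hn : 0 ≤ n) (hb : b ≠ ⊤)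
    (hab : a ^ (2 : ℝ) / b ≠ ⊤) :
    (a ^ (2 : ℝ) / b) ^ (n / (n + 1)) * (b ^ n) ^ (1 / (n + 1)) = a ^ (2 * n / (n + 1)) := by
  rw [← rpow_mul, show n * (1 / (n + 1)) = n / (n + 1) by ring,
    div_rpow_mul_rpow_of_div_ne_top (by positivity) hb hab, ← rpow_mul]
  ring_nf

theorem eq_rpow_mul_rpow_of_div_div_eq {x b F G : ℝ≥0∞} {m : ℝ} (hm : 0 ≤ m) (hb : b ≠ ⊤)
    (hxb : x / b ≠ ⊤) (hF0 : F ≠ 0) (hF : F ≠ ⊤) (hG0 : G ≠ 0) (hG : G ≠ ⊤)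
    (h : x / b / F = b ^ m / G) : b = (G / F) ^ (1 / (m + 1)) * x ^ (1 / (m + 1)) := by
  rw [ENNReal.div_eq_div_iff hG0 hG hF0 hF] at h
  have hpow : b ^ (m + 1) = G / F * x :=
    calc b ^ (m + 1) = F * b ^ (m + 1) / F := by rw [mul_comm, ENNReal.mul_div_cancel_right hF0 hF]
      _ = F * b ^ m * b / F := by rw [rpow_add_of_nonneg _ _ hm zero_le_one, rpow_one, mul_assoc]
      _ = G * (x / b) * b / F := by rw [h]
      _ = G / F * x := by
        rw [mul_assoc, div_mul_cancel_of_div_ne_top hb hxb, ENNReal.mul_div_right_comm]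
  rw [← mul_rpow_of_nonneg _ _ (by positivity), ← hpow, ← rpow_mul,
    mul_one_div_cancel (by positivity), rpow_one]

end ENNReal

/-- **Rigidity in the Hölder-type inequality**: if `0 < ∫⁻ φ^(2n/(n+1)) < ∞` and
`∫⁻ fⁿ < ∞`, and if equality `(∫⁻ φ^(2n/(n+1)))^((n+1)/n) = (∫⁻ φ²/f) · (∫⁻ fⁿ)^(1/n)`
holds, then `f = c · φ^(2/(n+1))` almost everywhere for some constant `c > 0`. -/
theorem lintegral_holder_chiral_bag_eq_iff {α : Type*} [MeasurableSpace α] (μ : Measure α)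
    (n : ℕ) (hn : 1 ≤ n) (φ : α → NNReal) (hφ : Measurable φ)
    (f : α → NNReal) (hf : Measurable f)
    (hpos : 0 < ∫⁻ x, (φ x : ℝ≥0∞) ^ ((2 * (n : ℝ)) / ((n : ℝ) + 1)) ∂μ)
    (hfin : (∫⁻ x, (φ x : ℝ≥0∞) ^ ((2 * (n : ℝ)) / ((n : ℝ) + 1)) ∂μ) < ∞)
    (hffin : (∫⁻ x, (f x : ℝ≥0∞) ^ (n : ℝ) ∂μ) < ∞)
    (heq : (∫⁻ x, (φ x : ℝ≥0∞) ^ ((2 * (n : ℝ)) / ((n : ℝ) + 1)) ∂μ) ^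
          (((n : ℝ) + 1) / (n : ℝ))
        = (∫⁻ x, (φ x : ℝ≥0∞) ^ (2 : ℝ) / (f x : ℝ≥0∞) ∂μ) *
          (∫⁻ x, (f x : ℝ≥0∞) ^ (n : ℝ) ∂μ) ^ (1 / (n : ℝ))) :
    ∃ c : NNReal, 0 < c ∧ ∀ᵐ x ∂μ, f x = c * φ x ^ ((2 : ℝ) / ((n : ℝ) + 1)) := by
  have hn0 : (0 : ℝ) < n := by exact_mod_cast hn
  set g : α → ℝ≥0∞ := fun x ↦ (φ x : ℝ≥0∞) ^ (2 : ℝ) / f x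
  set G := ∫⁻ x, g x ∂μ
  set H := ∫⁻ x, (f x : ℝ≥0∞) ^ (n : ℝ) ∂μ
  obtain ⟨hG0, hG_top, hH0⟩ := ne_zero_and_ne_top_of_rpow_eq_mul_rpow (by positivity)
    (by positivity) hpos.ne' hfin.ne hffin.ne heq
  have hg_fin : ∀ᵐ x ∂μ, g x ≠ ⊤ := (ae_lt_top (by fun_prop) hG_top).mono fun _ ↦ ne_of_lt
  have hholder_eq :
      ∫⁻ x, g x ^ ((n : ℝ) / (n + 1)) * ((f x : ℝ≥0∞) ^ (n : ℝ)) ^ (1 / ((n : ℝ) + 1)) ∂μ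
        = G ^ ((n : ℝ) / (n + 1)) * H ^ (1 / ((n : ℝ) + 1)) := by
    rw [← eq_rpow_mul_rpow_of_rpow_add_one_div_eq hn0 heq]
    exact lintegral_congr_ae (hg_fin.mono fun x hx ↦
      rpow_two_div_rpow_mul_rpow_rpow hn0.le coe_ne_top hx)
  have hnormal := ae_div_lintegral_eq_of_lintegral_rpow_mul_rpow_eq (by positivity)
    (by positivity) (by field_simp) (by fun_prop) (by fun_prop) hG0 hG_top hH0 hffin.ne
    hholder_eq
  set c := (H / G) ^ (1 / ((n : ℝ) + 1))
  refine ⟨c.toNNReal, toNNReal_pos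
    (rpow_pos_of_nonneg (ENNReal.div_pos hH0 hG_top) (by positivity)).ne' (by finiteness), ?_⟩
  filter_upwards [hnormal, hg_fin] with x hx hgx
  rw [← coe_inj, coe_mul, coe_toNNReal (by finiteness), coe_rpow_of_nonneg _ (by positivity),
    eq_rpow_mul_rpow_of_div_div_eq hn0.le coe_ne_top hgx hG0 hG_top hH0 hffin.ne hx, ← rpow_mul,
    mul_one_div]
end

section
/- Let (α, μ) be a finite measure space and n ≥ 1 a natural number. For every measurable φ : α → [0,∞), the infimum, over all measurable functions f : α → [0,∞) with f(x) > 0 for every x, of the quantity (∫⁻ φ²/f dμ) · (∫⁻ fⁿ dμ)^{1/n} equals (∫⁻ φ^{2n/(n+1)} dμ)^{(n+1)/n}. -/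
open MeasureTheory ENNReal NNReal Filter Topology

/-!
Write `I = ∫⁻ ψ^(q/(q+1))`. Hölder's inequality with the conjugate exponents `(q+1)/q` and
`q+1`, applied to `(ψ/f)^(q/(q+1))` and `f^(q/(q+1))`, gives `I^((q+1)/q) ≤ (∫⁻ ψ/f)·‖f‖_q` for
every admissible `f`. Equality holds for `f = ψ^(1/(q+1))`, which may vanish, so one tests with
`f = ψ^(1/(q+1)) + ε` instead: then `∫⁻ ψ/f ≤ I`, and by Minkowski `‖f‖_q ≤ I^(1/q) + ε μ(α)^(1/q)`,
which tends to `I^(1/q)` as `ε → 0` because `μ` is finite.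
-/

section
variable {α : Type*} [MeasurableSpace α] {μ : Measure α}

theorem lintegral_rpow_le_lintegral_div_mul_lintegral_rpow {q : ℝ} (hq : 0 < q)
    {g f : α → ℝ≥0∞} (hg : AEMeasurable g μ) (hf : AEMeasurable f μ)
    (hf0 : ∀ᵐ x ∂μ, f x ≠ 0) (hftop : ∀ᵐ x ∂μ, f x ≠ ∞) :
    (∫⁻ x, g x ^ (q / (q + 1)) ∂μ) ^ ((q + 1) / q) ≤
      (∫⁻ x, g x / f x ∂μ) * (∫⁻ x, f x ^ q ∂μ) ^ (1 / q) := by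
  set a := q / (q + 1) with ha
  set b := 1 / (q + 1) with hb
  have ha0 : 0 < a := by positivity
  have hb0 : 0 < b := by positivity
  have hab : a + b = 1 := by rw [ha, hb]; field_simp
  have holder := ENNReal.lintegral_mul_le_Lp_mul_Lq μ (Real.holderConjugate_one_div ha0 hb0 hab)
    ((hg.div hf).pow_const a) (hf.pow_const a)
  have hsplit : ∫⁻ x, g x ^ a ∂μ ≤ ∫⁻ x, ((fun x ↦ (g x / f x) ^ a) * fun x ↦ f x ^ a) x ∂μ := by
    refine lintegral_mono_ae ?_
    filter_upwards [hf0, hftop] with x hx0 hxtop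
    rw [Pi.mul_apply, ← ENNReal.mul_rpow_of_nonneg _ _ ha0.le, ENNReal.div_mul_cancel hx0 hxtop]
  have hexp : (q + 1) / q = 1 / a := by rw [ha, one_div_div]
  simp only [← ENNReal.rpow_mul, one_div_one_div, show a * (1 / b) = q by rw [ha, hb]; field_simp,
    mul_one_div_cancel ha0.ne', ENNReal.rpow_one] at holder
  calc (∫⁻ x, g x ^ a ∂μ) ^ ((q + 1) / q)
      ≤ ((∫⁻ x, g x / f x ∂μ) ^ a * (∫⁻ x, f x ^ q ∂μ) ^ b) ^ (1 / a) := by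
        rw [hexp]; gcongr; exact hsplit.trans holder
    _ = (∫⁻ x, g x / f x ∂μ) * (∫⁻ x, f x ^ q ∂μ) ^ (1 / q) := by
        rw [ENNReal.mul_rpow_of_nonneg _ _ (by positivity), ← ENNReal.rpow_mul, ← ENNReal.rpow_mul,
          mul_one_div_cancel ha0.ne', ENNReal.rpow_one, ha, hb]
        congr 2
        field_simp

theorem lintegral_add_const_rpow_rpow_le {p : ℝ} (hp : 1 ≤ p) {g : α → ℝ≥0∞}
    (hg : AEMeasurable g μ) (c : ℝ≥0∞) :
    (∫⁻ x, (g x + c) ^ p ∂μ) ^ (1 / p) ≤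
      (∫⁻ x, g x ^ p ∂μ) ^ (1 / p) + c * μ Set.univ ^ (1 / p) := by
  have hp0 : 0 < p := zero_lt_one.trans_le hp
  have minkowski := ENNReal.lintegral_Lp_add_le hg (aemeasurable_const (b := c)) hp
  rwa [lintegral_const, ENNReal.mul_rpow_of_nonneg _ _ (by positivity), ← ENNReal.rpow_mul,
    mul_one_div_cancel hp0.ne', ENNReal.rpow_one] at minkowski

theorem iInf_lintegral_div_mul_lintegral_rpow_le_add_mul {q : ℝ} (hq : 1 ≤ q) {ψ : α → ℝ≥0}
    (hψ : Measurable ψ) {ε : ℝ≥0} (hε : 0 < ε) :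
    ⨅ (f : α → ℝ≥0) (_ : Measurable f) (_ : ∀ x, 0 < f x),
        (∫⁻ x, (ψ x : ℝ≥0∞) / f x ∂μ) * (∫⁻ x, (f x : ℝ≥0∞) ^ q ∂μ) ^ (1 / q) ≤
      (∫⁻ x, (ψ x : ℝ≥0∞) ^ (q / (q + 1)) ∂μ) *
        ((∫⁻ x, (ψ x : ℝ≥0∞) ^ (q / (q + 1)) ∂μ) ^ (1 / q) + ε * μ Set.univ ^ (1 / q)) := by
  have hq0 : 0 < q := zero_lt_one.trans_le hq
  set r := 1 / (q + 1) with hr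
  set f : α → ℝ≥0 := fun x ↦ ψ x ^ r + ε
  have hf : Measurable f := (hψ.pow_const r).add measurable_const
  have hfpos : ∀ x, 0 < f x := fun x ↦ add_pos_of_nonneg_of_pos zero_le hε
  have hf_coe : ∀ x, (f x : ℝ≥0∞) = (ψ x : ℝ≥0∞) ^ r + ε := fun x ↦ by
    simp only [f, ENNReal.coe_add, ENNReal.coe_rpow_of_nonneg _ (by positivity : 0 ≤ r)]
  have hdiv : ∀ x, (ψ x : ℝ≥0∞) / f x ≤ (ψ x : ℝ≥0∞) ^ (q / (q + 1)) := fun x ↦ by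
    refine ENNReal.div_le_of_le_mul ?_
    calc (ψ x : ℝ≥0∞) = (ψ x : ℝ≥0∞) ^ (q / (q + 1)) * (ψ x : ℝ≥0∞) ^ r := by
          rw [← ENNReal.rpow_add_of_nonneg _ _ (by positivity) (by positivity), hr,
            ← add_div, div_self (by positivity), ENNReal.rpow_one]
      _ ≤ (ψ x : ℝ≥0∞) ^ (q / (q + 1)) * f x := by rw [hf_coe]; gcongr; exact le_self_add
  have hpow : ∀ x, ((ψ x : ℝ≥0∞) ^ r) ^ q = (ψ x : ℝ≥0∞) ^ (q / (q + 1)) := fun x ↦ by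
    rw [← ENNReal.rpow_mul, hr, one_div_mul_eq_div]
  calc _ ≤ (∫⁻ x, (ψ x : ℝ≥0∞) / f x ∂μ) * (∫⁻ x, (f x : ℝ≥0∞) ^ q ∂μ) ^ (1 / q) :=
        iInf₂_le_of_le f hf (iInf_le _ hfpos)
    _ ≤ _ := by
        gcongr
        · exact hdiv _
        · simpa only [hf_coe, hpow] using lintegral_add_const_rpow_rpow_le hq
            ((hψ.coe_nnreal_ennreal.pow_const r).aemeasurable) (ε : ℝ≥0∞)

theorem iInf_lintegral_div_mul_lintegral_rpow [IsFiniteMeasure μ] {q : ℝ} (hq : 1 ≤ q)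
    {ψ : α → ℝ≥0} (hψ : Measurable ψ) :
    ⨅ (f : α → ℝ≥0) (_ : Measurable f) (_ : ∀ x, 0 < f x),
        (∫⁻ x, (ψ x : ℝ≥0∞) / f x ∂μ) * (∫⁻ x, (f x : ℝ≥0∞) ^ q ∂μ) ^ (1 / q) =
      (∫⁻ x, (ψ x : ℝ≥0∞) ^ (q / (q + 1)) ∂μ) ^ ((q + 1) / q) := by
  have hq0 : 0 < q := zero_lt_one.trans_le hq
  set I := ∫⁻ x, (ψ x : ℝ≥0∞) ^ (q / (q + 1)) ∂μ
  refine le_antisymm ?_ <| le_iInf₂ fun f hf ↦ le_iInf fun hfpos ↦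
    lintegral_rpow_le_lintegral_div_mul_lintegral_rpow hq0 hψ.coe_nnreal_ennreal.aemeasurable
      hf.coe_nnreal_ennreal.aemeasurable (ae_of_all _ fun x ↦ by simpa using (hfpos x).ne')
      (ae_of_all _ fun _ ↦ ENNReal.coe_ne_top)
  obtain hI | hI := eq_or_ne I ∞
  · simp [hI, ENNReal.top_rpow_of_pos (by positivity : 0 < (q + 1) / q)]
  have hI_pow : I * (I ^ (1 / q) + 0 * μ Set.univ ^ (1 / q)) = I ^ ((q + 1) / q) := by
    rw [zero_mul, add_zero, add_div, div_self hq0.ne', ENNReal.rpow_add_of_nonneg _ _ zero_le_one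
      (by positivity), ENNReal.rpow_one]
  have hlim : Tendsto (fun ε : ℝ≥0 ↦ I * (I ^ (1 / q) + ε * μ Set.univ ^ (1 / q))) (𝓝[>] 0)
      (𝓝 (I ^ ((q + 1) / q))) := by
    rw [← hI_pow]
    refine ENNReal.Tendsto.const_mul (tendsto_const_nhds.add (ENNReal.Tendsto.mul_const ?_ ?_))
      (Or.inr hI)
    · exact ENNReal.tendsto_coe.2 (tendsto_nhdsWithin_of_tendsto_nhds tendsto_id)
    · exact Or.inr (ENNReal.rpow_ne_top_of_nonneg (by positivity) (measure_ne_top μ _))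
  exact ge_of_tendsto hlim <| eventually_nhdsWithin_of_forall fun ε hε ↦
    iInf_lintegral_div_mul_lintegral_rpow_le_add_mul hq hψ hε

end

/-- **Variational characterization step for the chiral bag invariant**: on a finite measure
space, the infimum over all everywhere-positive measurable `f` of
`(∫⁻ φ²/f) · (∫⁻ fⁿ)^(1/n)` equals `(∫⁻ φ^(2n/(n+1)))^((n+1)/n)`. -/
theorem iInf_lintegral_holder_chiral_bag {α : Type*} [MeasurableSpace α] (μ : Measure α)
    [IsFiniteMeasure μ] (n : ℕ) (hn : 1 ≤ n) (φ : α → NNReal) (hφ : Measurable φ) :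
    ⨅ (f : α → NNReal) (_ : Measurable f) (_ : ∀ x, 0 < f x),
        (∫⁻ x, (φ x : ℝ≥0∞) ^ (2 : ℝ) / (f x : ℝ≥0∞) ∂μ) *
          (∫⁻ x, (f x : ℝ≥0∞) ^ (n : ℝ) ∂μ) ^ (1 / (n : ℝ))
      = (∫⁻ x, (φ x : ℝ≥0∞) ^ ((2 * (n : ℝ)) / ((n : ℝ) + 1)) ∂μ) ^
          (((n : ℝ) + 1) / (n : ℝ)) := by
  have hsq : ∀ x, (φ x : ℝ≥0∞) ^ (2 : ℝ) = ((φ x ^ (2 : ℝ) : ℝ≥0) : ℝ≥0∞) := fun x ↦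
    (ENNReal.coe_rpow_of_nonneg _ zero_le_two).symm
  have hpow : ∀ x, (φ x : ℝ≥0∞) ^ ((2 * (n : ℝ)) / ((n : ℝ) + 1)) =
      ((φ x ^ (2 : ℝ) : ℝ≥0) : ℝ≥0∞) ^ ((n : ℝ) / ((n : ℝ) + 1)) := fun x ↦ by
    rw [← hsq, ← ENNReal.rpow_mul, mul_div_assoc]
  simp_rw [hsq, hpow]
  exact iInf_lintegral_div_mul_lintegral_rpow (by exact_mod_cast hn) (hφ.pow_const _)
end

section
/- For every natural number n ≥ 1, the function x ↦ (2/(1+‖x‖²))ⁿ is integrable on the n-dimensional Euclidean space, and ∫_{ℝⁿ} (2/(1+‖x‖²))ⁿ dx = (n+1) · Vol(B^{n+1}), where Vol(B^{n+1}) is the Lebesgue measure of the open unit ball of the (n+1)-dimensional Euclidean space. -/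
/-!
In polar coordinates the integral becomes `n · Vol(Bⁿ) · ∫₀^∞ rⁿ⁻¹ (2/(1+r²))ⁿ dr`, and the
substitution `r = tan (θ/2)` (stereographic projection in the radial variable, under which
`2r/(1+r²) = sin θ` and `dr = (1+r²)/2 dθ`) turns the radial integral into `∫₀^π sinⁿ⁻¹ θ dθ`.
With `ωₖ = (k+1) · Vol(Bᵏ⁺¹) = 2 √πᵏ⁺¹ / Γ((k+1)/2)` the area of `Sᵏ`, the Gamma form of the
sine integral makes `ωₙ₋₁ · ∫₀^π sinⁿ⁻¹ = ωₙ` an instance of `Γ(s+1) = s Γ(s)`.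
-/

open MeasureTheory Real Set

lemma sin_two_mul_arctan (x : ℝ) : sin (2 * arctan x) = 2 * x / (1 + x ^ 2) := by
  have h : 0 < 1 + x ^ 2 := by positivity
  rw [sin_two_mul, sin_arctan, cos_arctan]
  field_simp
  rw [sq_sqrt h.le]

lemma image_two_mul_arctan_Ioi_zero : (fun x ↦ 2 * arctan x) '' Ioi 0 = Ioo 0 π := by
  ext θ
  constructor
  · rintro ⟨x, hx, rfl⟩
    have hpos : 0 < arctan x := by simpa using arctan_strictMono (mem_Ioi.mp hx)
    constructor <;> linarith [arctan_lt_pi_div_two x]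
  · rintro ⟨h0, hπ⟩
    refine ⟨tan (θ / 2), tan_pos_of_pos_of_lt_pi_div_two (by linarith) (by linarith), ?_⟩
    change 2 * arctan (tan (θ / 2)) = θ
    rw [arctan_tan (by linarith) (by linarith)]
    ring

lemma integral_Ioi_pow_mul_two_div_one_add_sq_pow (m : ℕ) :
    ∫ y in Ioi (0 : ℝ), y ^ m * (2 / (1 + y ^ 2)) ^ (m + 1) = ∫ θ in 0..π, sin θ ^ m := by
  have hderiv : ∀ x ∈ Ioi (0 : ℝ),
      HasDerivWithinAt (fun x ↦ 2 * arctan x) (2 * (1 / (1 + x ^ 2))) (Ioi 0) x :=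
    fun x _ ↦ ((hasDerivAt_arctan x).const_mul 2).hasDerivWithinAt
  have hmono : MonotoneOn (fun x ↦ 2 * arctan x) (Ioi 0) := fun x _ y _ hxy ↦ by
    simpa using arctan_strictMono.monotone hxy
  rw [intervalIntegral.integral_of_le pi_pos.le, integral_Ioc_eq_integral_Ioo,
    ← image_two_mul_arctan_Ioi_zero,
    integral_image_eq_integral_deriv_smul_of_monotoneOn measurableSet_Ioi hderiv hmono]
  refine setIntegral_congr_fun measurableSet_Ioi fun y _ ↦ ?_
  rw [smul_eq_mul, sin_two_mul_arctan]
  ring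

lemma integral_sin_pow_eq_sqrt_pi_mul_Gamma_div (m : ℕ) :
    ∫ θ in 0..π, sin θ ^ m = √π * Gamma ((m + 1) / 2) / Gamma (m / 2 + 1) := by
  induction m using Nat.twoStepInduction with
  | zero => simp [-one_div, Gamma_one_half_eq, mul_self_sqrt pi_pos.le]
  | one =>
    have hπ : √π ≠ 0 := (sqrt_pos.mpr pi_pos).ne'
    simp only [pow_one]
    rw [integral_sin, cos_zero, cos_pi, Nat.cast_one, add_self_div_two,
      Gamma_one, Gamma_add_one one_half_pos.ne', Gamma_one_half_eq]
    field_simp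
    norm_num
  | more m ih _ =>
    have hΓ₁ : Gamma ((m + 1) / 2 + 1) = (m + 1) / 2 * Gamma ((m + 1) / 2) :=
      Gamma_add_one (by positivity)
    have hΓ₂ : Gamma (m / 2 + 1 + 1) = (m / 2 + 1) * Gamma (m / 2 + 1) :=
      Gamma_add_one (by positivity)
    have hΓ₁_ne : Gamma ((m + 1) / 2) ≠ 0 := (Gamma_pos_of_pos (by positivity)).ne'
    have hΓ₂_ne : Gamma (m / 2 + 1) ≠ 0 := (Gamma_pos_of_pos (by positivity)).ne'
    rw [integral_sin_pow, ih, sin_zero, sin_pi]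
    push_cast
    rw [show ((m : ℝ) + 2 + 1) / 2 = (m + 1) / 2 + 1 by ring,
      show ((m : ℝ) + 2) / 2 + 1 = m / 2 + 1 + 1 by ring, hΓ₁, hΓ₂]
    field_simp
    ring

lemma integrable_two_div_one_add_norm_sq_pow {E : Type*} [NormedAddCommGroup E]
    [NormedSpace ℝ E] [FiniteDimensional ℝ E] [MeasurableSpace E] [BorelSpace E]
    (μ : Measure E) [μ.IsAddHaarMeasure] {n : ℕ} (hn : Module.finrank ℝ E < 2 * n) :
    Integrable (fun x : E ↦ (2 / (1 + ‖x‖ ^ 2)) ^ n) μ := by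
  refine ((integrable_rpow_neg_one_add_norm_sq (μ := μ) (r := 2 * n)
    (by exact_mod_cast hn)).const_mul (2 ^ n)).congr (.of_forall fun x ↦ ?_)
  dsimp only
  rw [neg_div, mul_div_cancel_left₀ _ two_ne_zero, rpow_neg (by positivity), rpow_natCast,
    div_pow, div_eq_mul_inv]

lemma succ_mul_volume_ball_toReal (k : ℕ) :
    ((k : ℝ) + 1) * (volume (Metric.ball (0 : EuclideanSpace ℝ (Fin (k + 1))) 1)).toReal
      = 2 * √π ^ (k + 1) / Gamma ((k + 1) / 2) := by
  have hΓ : Gamma ((k + 1) / 2 + 1) = (k + 1) / 2 * Gamma ((k + 1) / 2) :=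
    Gamma_add_one (by positivity)
  have hΓ_ne : Gamma ((k + 1) / 2) ≠ 0 := (Gamma_pos_of_pos (by positivity)).ne'
  rw [EuclideanSpace.volume_ball, Fintype.card_fin, ENNReal.ofReal_one, one_pow, one_mul,
    ENNReal.toReal_ofReal (by positivity)]
  push_cast
  rw [hΓ]
  field_simp

lemma succ_mul_volume_ball_mul_integral_sin_pow (m : ℕ) :
    ((m : ℝ) + 1) * (volume (Metric.ball (0 : EuclideanSpace ℝ (Fin (m + 1))) 1)).toReal
        * ∫ θ in 0..π, sin θ ^ m
      = (((m + 1 : ℕ) : ℝ) + 1) *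
          (volume (Metric.ball (0 : EuclideanSpace ℝ (Fin (m + 1 + 1))) 1)).toReal := by
  have hΓ_ne : Gamma ((m + 1) / 2) ≠ 0 := (Gamma_pos_of_pos (by positivity)).ne'
  rw [succ_mul_volume_ball_toReal, succ_mul_volume_ball_toReal,
    integral_sin_pow_eq_sqrt_pi_mul_Gamma_div]
  push_cast
  rw [show ((m : ℝ) + 1 + 1) / 2 = m / 2 + 1 by ring]
  field_simp
  ring

/-- The conformal factor `f x = 2/(1+‖x‖²)` of the inverse stereographic projection
satisfies: `fⁿ` is integrable on `ℝⁿ` and `∫_{ℝⁿ} fⁿ = (n+1)·Vol(B^{n+1}) = ω_n`, the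
total surface measure of the unit sphere `Sⁿ ⊂ ℝ^{n+1}`. -/
theorem integral_conformal_factor_pow (n : ℕ) (hn : 1 ≤ n) :
    Integrable (fun x : EuclideanSpace ℝ (Fin n) => (2 / (1 + ‖x‖ ^ 2)) ^ n) volume ∧
      ∫ x : EuclideanSpace ℝ (Fin n), (2 / (1 + ‖x‖ ^ 2)) ^ n
        = ((n : ℝ) + 1) *
          (volume (Metric.ball (0 : EuclideanSpace ℝ (Fin (n + 1))) 1)).toReal := by
  obtain ⟨m, rfl⟩ := Nat.exists_eq_add_of_le' hn
  refine ⟨integrable_two_div_one_add_norm_sq_pow volume (by simp), ?_⟩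
  rw [integral_fun_norm_addHaar volume (fun y ↦ (2 / (1 + y ^ 2)) ^ (m + 1)),
    finrank_euclideanSpace_fin, Nat.add_sub_cancel, measureReal_def]
  simp only [nsmul_eq_mul, smul_eq_mul]
  rw [integral_Ioi_pow_mul_two_div_one_add_sq_pow, ← succ_mul_volume_ball_mul_integral_sin_pow]
  push_cast
  ring
end

section
/- Let A > 0 and let a, b, c be real numbers with −1 < a, 0 < c, and a − 2b + 1 < c. Then ε^c · ∫_{0}^{A/ε} r^a · (2/(1+r²))^b dr tends to 0 as ε → 0 from the right (the integral being over the interval (0, A/ε] with respect to Lebesgue measure, and r^a, (2/(1+r²))^b, ε^c denoting real powers). -/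
open MeasureTheory Filter Set Topology

/-!
On `(0, 1]` the factor `2 / (1 + r²)` lies in `[1, 2]` and on `[1, ∞)` in `[r⁻², 2 r⁻²]`, so the
integrand is at most `2^|b| rᵃ` near `0` and `2^|b| r^q` beyond `1` for any `q ≥ a - 2b`. Taking
moreover `-1 < q < c - 1`, its integral over `(0, R]` is `O(1 + R^(q+1))`, and for `R = A / ε`
both terms are killed by the factor `ε^c`.
-/

lemma tendsto_rpow_nhdsGT_zero {s : ℝ} (hs : 0 < s) :
    Tendsto (fun x : ℝ => x ^ s) (𝓝[>] 0) (𝓝 0) := by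
  simpa [Real.zero_rpow hs.ne'] using
    (Real.continuousAt_rpow_const 0 s (Or.inr hs.le)).tendsto.mono_left nhdsWithin_le_nhds

lemma integral_Ioc_zero_rpow {q R : ℝ} (hq : -1 < q) (hR : 0 ≤ R) :
    ∫ r in Ioc 0 R, r ^ q = R ^ (q + 1) / (q + 1) := by
  rw [← intervalIntegral.integral_of_le hR, integral_rpow (Or.inl hq),
    Real.zero_rpow (by linarith), sub_zero]

lemma integrableOn_Ioc_zero_rpow {q R : ℝ} (hq : -1 < q) :
    IntegrableOn (fun r : ℝ => r ^ q) (Ioc 0 R) := by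
  rcases le_total 0 R with hR | hR
  · exact (intervalIntegral.intervalIntegrable_rpow' hq).1
  · simp [Ioc_eq_empty_of_le hR]

section DominatedByPowers

variable {f : ℝ → ℝ} {a q K : ℝ}

lemma setIntegral_Ioc_zero_le_of_le_rpow (ha : -1 < a) (hq : -1 < q) (hK : 0 ≤ K)
    (hf₀ : ∀ r ∈ Ioi 0, 0 ≤ f r) (hf₁ : ∀ r ∈ Ioc 0 1, f r ≤ K * r ^ a)
    (hf₂ : ∀ r ∈ Ioi 1, f r ≤ K * r ^ q) {R : ℝ} (hR : 0 ≤ R) :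
    ∫ r in Ioc 0 R, f r ≤ K * (1 / (a + 1) + R ^ (q + 1) / (q + 1)) := by
  set g : ℝ → ℝ := fun r => (Ioc 0 1).indicator (· ^ a) r + r ^ q
  have hint_a : IntegrableOn (fun r : ℝ => r ^ a) (Ioc 0 1) := integrableOn_Ioc_zero_rpow ha
  have hg : IntegrableOn g (Ioc 0 R) :=
    (hint_a.integrable_indicator measurableSet_Ioc).integrableOn.add
      (integrableOn_Ioc_zero_rpow hq)
  have hfg : ∀ r ∈ Ioc 0 R, f r ≤ K * g r := by
    intro r hr
    by_cases hr₁ : r ≤ 1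
    · have : 0 ≤ r ^ q := Real.rpow_nonneg hr.1.le q
      simp only [g, indicator_of_mem (show r ∈ Ioc 0 1 from ⟨hr.1, hr₁⟩)]
      nlinarith [hf₁ r ⟨hr.1, hr₁⟩]
    · simpa [g, indicator_of_notMem (fun h : r ∈ Ioc 0 1 => hr₁ h.2)] using
        hf₂ r (not_le.mp hr₁)
  calc ∫ r in Ioc 0 R, f r
      ≤ ∫ r in Ioc 0 R, K * g r :=
        integral_mono_of_nonneg
          ((ae_restrict_iff' measurableSet_Ioc).2 (.of_forall fun r hr => hf₀ r hr.1))
          (hg.const_mul K) ((ae_restrict_iff' measurableSet_Ioc).2 (.of_forall hfg))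
    _ = K * ((∫ r in Ioc 0 R ∩ Ioc 0 1, r ^ a) + ∫ r in Ioc 0 R, r ^ q) := by
        rw [integral_const_mul, integral_add
          ((hint_a.integrable_indicator measurableSet_Ioc).integrableOn)
          (integrableOn_Ioc_zero_rpow hq), setIntegral_indicator measurableSet_Ioc]
    _ ≤ K * ((∫ r in Ioc 0 1, r ^ a) + ∫ r in Ioc 0 R, r ^ q) := by
        gcongr
        · exact (ae_restrict_iff' measurableSet_Ioc).2
            (.of_forall fun r hr => Real.rpow_nonneg hr.1.le a)
        · exact inter_subset_right
    _ = K * (1 / (a + 1) + R ^ (q + 1) / (q + 1)) := by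
        rw [integral_Ioc_zero_rpow ha zero_le_one, integral_Ioc_zero_rpow hq hR, Real.one_rpow]

lemma tendsto_rpow_mul_setIntegral_Ioc_zero_div_of_le_rpow {A c : ℝ} (hA : 0 < A) (hc : 0 < c)
    (hqc : q + 1 < c) (ha : -1 < a) (hq : -1 < q) (hK : 0 ≤ K)
    (hf₀ : ∀ r ∈ Ioi 0, 0 ≤ f r) (hf₁ : ∀ r ∈ Ioc 0 1, f r ≤ K * r ^ a)
    (hf₂ : ∀ r ∈ Ioi 1, f r ≤ K * r ^ q) :
    Tendsto (fun ε : ℝ => ε ^ c * ∫ r in Ioc 0 (A / ε), f r) (𝓝[>] 0) (𝓝 0) := by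
  have hbound : ∀ ε ∈ Ioi (0 : ℝ), ε ^ c * ∫ r in Ioc 0 (A / ε), f r
      ≤ K / (a + 1) * ε ^ c + K * A ^ (q + 1) / (q + 1) * ε ^ (c - (q + 1)) := by
    intro ε hε
    calc ε ^ c * ∫ r in Ioc 0 (A / ε), f r
        ≤ ε ^ c * (K * (1 / (a + 1) + (A / ε) ^ (q + 1) / (q + 1))) := by
          gcongr
          · exact Real.rpow_nonneg (le_of_lt hε) c
          · exact setIntegral_Ioc_zero_le_of_le_rpow ha hq hK hf₀ hf₁ hf₂
              (div_nonneg hA.le (le_of_lt hε))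
      _ = K / (a + 1) * ε ^ c + K * A ^ (q + 1) / (q + 1) * ε ^ (c - (q + 1)) := by
          rw [Real.div_rpow hA.le (le_of_lt hε), Real.rpow_sub hε]
          field_simp
  have hnonneg : ∀ ε ∈ Ioi (0 : ℝ), 0 ≤ ε ^ c * ∫ r in Ioc 0 (A / ε), f r := fun ε hε =>
    mul_nonneg (Real.rpow_nonneg (le_of_lt hε) c)
      (setIntegral_nonneg measurableSet_Ioc fun r hr => hf₀ r hr.1)
  refine squeeze_zero' (eventually_nhdsWithin_of_forall hnonneg)
    (eventually_nhdsWithin_of_forall hbound) ?_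
  simpa using ((tendsto_rpow_nhdsGT_zero hc).const_mul _).add
    ((tendsto_rpow_nhdsGT_zero (sub_pos.2 hqc)).const_mul _)

end DominatedByPowers

lemma rpow_le_two_rpow_abs {t : ℝ} (b : ℝ) (h₁ : 1 ≤ t) (h₂ : t ≤ 2) : t ^ b ≤ 2 ^ |b| := by
  rcases le_total 0 b with hb | hb
  · rw [abs_of_nonneg hb]
    exact Real.rpow_le_rpow (by linarith) h₂ hb
  · exact (Real.rpow_le_one_of_one_le_of_nonpos h₁ hb).trans
      (Real.one_le_rpow one_le_two (abs_nonneg b))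

lemma conformalFactor_rpow_le_of_le_one {r : ℝ} (b : ℝ) (hr : r ≤ 1) (hr₀ : 0 ≤ r) :
    (2 / (1 + r ^ 2)) ^ b ≤ 2 ^ |b| := by
  refine rpow_le_two_rpow_abs b ?_ ?_
  · rw [le_div_iff₀ (by positivity)]; nlinarith
  · rw [div_le_iff₀ (by positivity)]; nlinarith

lemma conformalFactor_rpow_le_of_one_le {r : ℝ} (b : ℝ) (hr : 1 ≤ r) :
    (2 / (1 + r ^ 2)) ^ b ≤ 2 ^ |b| * r ^ (-2 * b) := by
  have hr₀ : 0 < r := by linarith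
  have hsplit : 2 / (1 + r ^ 2) = 2 * r ^ 2 / (1 + r ^ 2) * (r ^ 2)⁻¹ := by
    field_simp
  rw [hsplit, Real.mul_rpow (by positivity) (by positivity), Real.inv_rpow (by positivity),
    ← Real.rpow_natCast_mul hr₀.le, ← Real.rpow_neg hr₀.le]
  push_cast
  rw [neg_mul]
  gcongr
  refine rpow_le_two_rpow_abs b ?_ ?_
  · rw [le_div_iff₀ (by positivity)]; nlinarith
  · rw [div_le_iff₀ (by positivity)]; nlinarith

lemma rpow_mul_conformalFactor_rpow_le_of_one_le {r a q : ℝ} (b : ℝ) (hr : 1 ≤ r)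
    (hq : a - 2 * b ≤ q) : r ^ a * (2 / (1 + r ^ 2)) ^ b ≤ 2 ^ |b| * r ^ q := by
  have hr₀ : 0 < r := by linarith
  calc r ^ a * (2 / (1 + r ^ 2)) ^ b ≤ r ^ a * (2 ^ |b| * r ^ (-2 * b)) := by
        gcongr
        exact conformalFactor_rpow_le_of_one_le b hr
    _ = 2 ^ |b| * r ^ (a - 2 * b) := by
        rw [sub_eq_add_neg, ← neg_mul, Real.rpow_add hr₀]; ring
    _ ≤ 2 ^ |b| * r ^ q := by gcongr

/-- Asymptotic lemma encoding the error estimates **B**–**F** in the proof of the main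
theorem: if `-1 < a`, `0 < c` and `a - 2b + 1 < c`, then
`ε^c · ∫_0^{A/ε} rᵃ (2/(1+r²))ᵇ dr → 0` as `ε → 0⁺`. -/
theorem tendsto_rpow_mul_integral_conformal_factor (A : ℝ) (hA : 0 < A)
    (a b c : ℝ) (ha : -1 < a) (hc : 0 < c) (habc : a - 2 * b + 1 < c) :
    Tendsto
      (fun ε : ℝ => ε ^ c * ∫ r in Set.Ioc (0 : ℝ) (A / ε), r ^ a * (2 / (1 + r ^ 2)) ^ b)
      (nhdsWithin 0 (Set.Ioi 0)) (nhds 0) := by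
  -- the maximum with `c / 2 - 1` keeps `q > -1` without breaking `q + 1 < c`
  set q := max (a - 2 * b) (c / 2 - 1)
  have hq : -1 < q := lt_max_of_lt_right (by linarith)
  have hqc : q + 1 < c := by
    rcases max_cases (a - 2 * b) (c / 2 - 1) with ⟨h, _⟩ | ⟨h, _⟩ <;> linarith
  refine tendsto_rpow_mul_setIntegral_Ioc_zero_div_of_le_rpow hA hc hqc ha hq
    (by positivity : (0 : ℝ) ≤ 2 ^ |b|) (fun r hr => by have := hr.out; positivity) ?_ ?_
  · intro r ⟨hr₀, hr₁⟩
    rw [mul_comm]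
    exact mul_le_mul_of_nonneg_right (conformalFactor_rpow_le_of_le_one b hr₁ hr₀.le)
      (Real.rpow_nonneg hr₀.le a)
  · exact fun r hr => rpow_mul_conformalFactor_rpow_le_of_one_le b (le_of_lt hr) (le_max_left _ _)
end

section
/- For every natural number n there exists a map S from n×n real matrices to n×n real matrices which is C^∞ on the set of positive-definite matrices and such that for every positive-definite matrix A, the matrix S(A) is positive-definite (in particular symmetric) and satisfies S(A)·S(A) = A⁻¹. -/
attribute [local instance] Matrix.normedAddCommGroup Matrix.normedSpace

open Matrix
open scoped MatrixOrder

variable {n : ℕ}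

local notation "Mat" => Matrix (Fin n) (Fin n) ℝ

lemma contDiff_entry (i j : Fin n) : ContDiff ℝ (⊤ : ℕ∞) (fun A : Mat => A i j) := by
  have h1 : ContDiff ℝ (⊤ : ℕ∞) (fun A : Mat => A i) := contDiff_pi.mp contDiff_id i
  exact contDiff_pi.mp h1 j

lemma contDiff_of_entries {E : Type*} [NormedAddCommGroup E] [NormedSpace ℝ E]
    {f : E → Mat} (h : ∀ i j, ContDiff ℝ (⊤ : ℕ∞) fun x => f x i j) : ContDiff ℝ (⊤ : ℕ∞) f :=
  contDiff_pi.mpr fun i => contDiff_pi.mpr fun j => h i j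

lemma contDiff_mul_mat : ContDiff ℝ (⊤ : ℕ∞) (fun p : Mat × Mat => p.1 * p.2) := by
  apply contDiff_of_entries
  intro i j
  simp only [Matrix.mul_apply]
  exact ContDiff.sum fun k _ =>
    ((contDiff_entry i k).comp contDiff_fst).mul ((contDiff_entry k j).comp contDiff_snd)

lemma contDiff_sq_mat : ContDiff ℝ (⊤ : ℕ∞) (fun A : Mat => A * A) :=
  contDiff_mul_mat.comp (contDiff_id.prodMk contDiff_id)

lemma contDiff_det_mat : ContDiff ℝ (⊤ : ℕ∞) (fun A : Mat => A.det) := by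
  have : (fun A : Mat => A.det)
      = fun A : Mat => ∑ σ : Equiv.Perm (Fin n), ((Equiv.Perm.sign σ : ℤ) : ℝ) * ∏ i, A (σ i) i := by
    funext A
    rw [Matrix.det_apply]
    simp [Units.smul_def, zsmul_eq_mul]
  rw [this]
  refine ContDiff.sum fun σ _ => contDiff_const.mul ?_
  exact contDiff_prod fun i _ => contDiff_entry (σ i) i

lemma contDiff_updateRow (j : Fin n) (v : Fin n → ℝ) :
    ContDiff ℝ (⊤ : ℕ∞) (fun A : Mat => A.updateRow j v) := by
  apply contDiff_of_entries
  intro k l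
  simp only [Matrix.updateRow_apply]
  by_cases h : k = j
  · simp only [if_pos h]; exact contDiff_const
  · simpa [h] using contDiff_entry k l

lemma contDiff_adjugate_mat : ContDiff ℝ (⊤ : ℕ∞) (fun A : Mat => A.adjugate) := by
  apply contDiff_of_entries
  intro i j
  simp only [Matrix.adjugate_apply]
  exact contDiff_det_mat.comp (contDiff_updateRow j (Pi.single i 1))

lemma contDiffAt_inv_mat {A₀ : Mat} (h : A₀.det ≠ 0) :
    ContDiffAt ℝ (⊤ : ℕ∞) (fun A : Mat => A⁻¹) A₀ := by
  have : (fun A : Mat => A⁻¹) = fun A : Mat => (A.det)⁻¹ • A.adjugate := by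
    funext A; rw [Matrix.inv_def, Ring.inverse_eq_inv']
  rw [this]
  exact (contDiff_det_mat.contDiffAt.inv h).smul contDiff_adjugate_mat.contDiffAt

lemma isBoundedBilinearMap_mul_mat :
    IsBoundedBilinearMap ℝ (fun p : Mat × Mat => p.1 * p.2) where
  add_left x₁ x₂ y := add_mul x₁ x₂ y
  smul_left c x y := smul_mul_assoc c x y
  add_right x y₁ y₂ := mul_add x y₁ y₂
  smul_right c x y := mul_smul_comm c x y
  bound := by
    refine ⟨n + 1, by positivity, fun A B => ?_⟩
    rw [Matrix.norm_le_iff (by positivity)]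
    intro i j
    calc ‖(A * B) i j‖ ≤ ∑ k, ‖A i k * B k j‖ := by
          rw [Matrix.mul_apply]; exact norm_sum_le _ _
      _ ≤ ∑ _k : Fin n, ‖A‖ * ‖B‖ := by
          refine Finset.sum_le_sum fun k _ => ?_
          rw [norm_mul]
          exact mul_le_mul (Matrix.norm_entry_le_entrywise_sup_norm A)
            (Matrix.norm_entry_le_entrywise_sup_norm B) (norm_nonneg _) (norm_nonneg _)
      _ = n * (‖A‖ * ‖B‖) := by simp [Finset.sum_const, mul_assoc]
      _ ≤ (n + 1) * ‖A‖ * ‖B‖ := by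
          have h1 : (0:ℝ) ≤ ‖A‖ := norm_nonneg _
          have h2 : (0:ℝ) ≤ ‖B‖ := norm_nonneg _
          nlinarith

/-- The Sylvester operator `H ↦ B*H + H*B` as a linear map. -/
def sylvesterLM (B : Mat) : Mat →ₗ[ℝ] Mat where
  toFun H := B * H + H * B
  map_add' H K := by noncomm_ring
  map_smul' c H := by
    simp [Matrix.mul_smul, Matrix.smul_mul, smul_add]

lemma sylvester_injective {B : Mat} (hB : B.PosDef) :
    Function.Injective (sylvesterLM B) := by
  rw [injective_iff_map_eq_zero]
  intro H hH
  have hH' : B * H + H * B = 0 := hH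
  -- trace identities
  have key : Hᵀ * (B * H) + Hᵀ * (H * B) = 0 := by
    rw [← mul_add, hH', mul_zero]
  have h1 : (Hᵀ * (B * H)).trace = ∑ i, (fun j => H j i) ⬝ᵥ (B *ᵥ (fun j => H j i)) := by
    simp only [Matrix.trace, Matrix.diag, Matrix.mul_apply, Matrix.transpose_apply,
      dotProduct, Matrix.mulVec, Finset.mul_sum]
  have h2 : (Hᵀ * (H * B)).trace = ∑ i, (H i) ⬝ᵥ (B *ᵥ (H i)) := by
    rw [Matrix.trace_mul_comm, mul_assoc]
    simp only [Matrix.trace, Matrix.diag, Matrix.mul_apply, Matrix.transpose_apply,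
      dotProduct, Matrix.mulVec, Finset.mul_sum]
  have hzero : (∑ i, (fun j => H j i) ⬝ᵥ (B *ᵥ (fun j => H j i))) + ∑ i, (H i) ⬝ᵥ (B *ᵥ (H i)) = 0 := by
    rw [← h1, ← h2, ← Matrix.trace_add, key, Matrix.trace_zero]
  have hnn1 : ∀ i : Fin n, 0 ≤ (fun j => H j i) ⬝ᵥ (B *ᵥ (fun j => H j i)) := fun i => by
    simpa using hB.posSemidef.dotProduct_mulVec_nonneg (fun j => H j i)
  have hnn2 : ∀ i : Fin n, 0 ≤ (H i) ⬝ᵥ (B *ᵥ (H i)) := fun i => by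
    simpa using hB.posSemidef.dotProduct_mulVec_nonneg (H i)
  have hsum1 : (∑ i, (fun j => H j i) ⬝ᵥ (B *ᵥ (fun j => H j i))) = 0 := by
    have := Finset.sum_nonneg (fun i (_ : i ∈ Finset.univ) => hnn1 i)
    have := Finset.sum_nonneg (fun i (_ : i ∈ Finset.univ) => hnn2 i)
    linarith
  have hcol : ∀ i : Fin n, (fun j => H j i) = (0 : Fin n → ℝ) := by
    intro i
    by_contra hne
    have := hB.dotProduct_mulVec_pos hne
    have h0 : (fun j => H j i) ⬝ᵥ (B *ᵥ (fun j => H j i)) = 0 := by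
      have hall := (Finset.sum_eq_zero_iff_of_nonneg
        (fun i (_ : i ∈ Finset.univ) => hnn1 i)).mp hsum1
      exact hall i (Finset.mem_univ i)
    simp only [star_trivial] at this
    rw [h0] at this
    exact lt_irrefl 0 this
  ext j i
  have := congrFun (hcol i) j
  simpa using this

/-- The Sylvester operator as a continuous linear equivalence. -/
noncomputable def sylvesterEquiv {B : Mat} (hB : B.PosDef) : Mat ≃L[ℝ] Mat :=
  LinearEquiv.toContinuousLinearEquiv
    (LinearEquiv.ofBijective (sylvesterLM B)
      ⟨sylvester_injective hB,
        (LinearMap.injective_iff_surjective).mp (sylvester_injective hB)⟩)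

lemma sylvesterEquiv_apply {B : Mat} (hB : B.PosDef) (H : Mat) :
    sylvesterEquiv hB H = B * H + H * B := rfl

lemma hasFDerivAt_sq_mat {B : Mat} (hB : B.PosDef) :
    HasFDerivAt (fun A : Mat => A * A) ((sylvesterEquiv hB : Mat →L[ℝ] Mat)) B := by
  have hb := isBoundedBilinearMap_mul_mat.hasFDerivAt (B, B)
  have hdiag : HasFDerivAt (fun A : Mat => (A, A))
      ((ContinuousLinearMap.id ℝ Mat).prod (ContinuousLinearMap.id ℝ Mat)) B :=
    (hasFDerivAt_id B).prodMk (hasFDerivAt_id B)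
  have hcomp := HasFDerivAt.comp (f := fun A : Mat => (A, A))
    (g := fun p : Mat × Mat => p.1 * p.2) B hb hdiag
  convert hcomp using 1
  all_goals rfl


lemma quad_form_bound (D : Mat) (x : Fin n → ℝ) (hx : ‖x‖ ≤ 1) :
    |x ⬝ᵥ (D *ᵥ x)| ≤ (n : ℝ)^2 * ‖D‖ := by
  have hxi : ∀ i, |x i| ≤ 1 := fun i => (norm_le_pi_norm x i).trans hx
  have hDij : ∀ i j, |D i j| ≤ ‖D‖ := fun i j => Matrix.norm_entry_le_entrywise_sup_norm D
  calc |x ⬝ᵥ (D *ᵥ x)| = |∑ i, x i * ∑ j, D i j * x j| := by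
        simp [dotProduct, Matrix.mulVec]
    _ ≤ ∑ i, |x i * ∑ j, D i j * x j| := Finset.abs_sum_le_sum_abs _ _
    _ ≤ ∑ _i : Fin n, ∑ _j : Fin n, ‖D‖ := by
        refine Finset.sum_le_sum fun i _ => ?_
        rw [abs_mul]
        calc |x i| * |∑ j, D i j * x j| ≤ 1 * ∑ j, |D i j * x j| := by
              refine mul_le_mul (hxi i) (Finset.abs_sum_le_sum_abs _ _) (abs_nonneg _) zero_le_one
          _ = ∑ j, |D i j| * |x j| := by rw [one_mul]; simp [abs_mul]
          _ ≤ ∑ _j : Fin n, ‖D‖ := by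
              refine Finset.sum_le_sum fun j _ => ?_
              calc |D i j| * |x j| ≤ ‖D‖ * 1 :=
                    mul_le_mul (hDij i j) (hxi j) (abs_nonneg _) (norm_nonneg _)
                _ = ‖D‖ := mul_one _
    _ = (n : ℝ)^2 * ‖D‖ := by simp [Finset.sum_const, pow_two]; ring

lemma continuous_quad_form (B : Mat) : Continuous (fun x : Fin n → ℝ => x ⬝ᵥ (B *ᵥ x)) := by
  simp only [dotProduct, Matrix.mulVec]
  exact continuous_finset_sum _ fun i _ =>
    (continuous_apply i).mul (continuous_finset_sum _ fun j _ =>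
      (continuous_const.mul (continuous_apply j)))

lemma posDef_stable {B₀ : Mat} (hB : B₀.PosDef) :
    ∃ ε > 0, ∀ B : Mat, B.IsHermitian → ‖B - B₀‖ < ε → B.PosDef := by
  by_cases hn : n = 0
  · refine ⟨1, one_pos, fun B hB' _ => Matrix.PosDef.of_dotProduct_mulVec_pos hB' fun x hx => ?_⟩
    exfalso
    exact hx (funext fun i => by subst hn; exact i.elim0)
  · have hn' : 0 < n := Nat.pos_of_ne_zero hn
    -- minimum of the quadratic form of B₀ on the unit sphere
    have hne : (Metric.sphere (0 : Fin n → ℝ) 1).Nonempty := by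
      refine ⟨Pi.single ⟨0, hn'⟩ 1, ?_⟩
      simp [Pi.norm_single]
    obtain ⟨u₀, hu₀s, hmin⟩ := (isCompact_sphere (0 : Fin n → ℝ) 1).exists_isMinOn hne
      (continuous_quad_form B₀).continuousOn
    set c := u₀ ⬝ᵥ (B₀ *ᵥ u₀) with hc
    have hu₀ : u₀ ≠ 0 := by
      intro h
      rw [h] at hu₀s
      simp at hu₀s
    have hcpos : 0 < c := by simpa using hB.dotProduct_mulVec_pos hu₀
    refine ⟨c / ((n : ℝ)^2 + 1), by positivity, fun B hB' hlt => Matrix.PosDef.of_dotProduct_mulVec_pos hB' fun x hx => ?_⟩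
    -- normalize x
    have hxn : ‖x‖ ≠ 0 := fun h => hx (norm_eq_zero.mp h)
    set u : Fin n → ℝ := ‖x‖⁻¹ • x with hu
    have hun : ‖u‖ = 1 := by
      rw [hu, norm_smul, norm_inv, norm_norm, inv_mul_cancel₀ hxn]
    have husphere : u ∈ Metric.sphere (0 : Fin n → ℝ) 1 := by simpa using hun
    have h1 : c ≤ u ⬝ᵥ (B₀ *ᵥ u) := hmin husphere
    have h2 : |u ⬝ᵥ ((B - B₀) *ᵥ u)| ≤ (n:ℝ)^2 * ‖B - B₀‖ :=
      quad_form_bound (B - B₀) u hun.le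
    have hsplit : u ⬝ᵥ (B *ᵥ u) = u ⬝ᵥ (B₀ *ᵥ u) + u ⬝ᵥ ((B - B₀) *ᵥ u) := by
      rw [← dotProduct_add, ← Matrix.add_mulVec]
      rw [add_sub_cancel]
    have hupos : 0 < u ⬝ᵥ (B *ᵥ u) := by
      have hbd : (n:ℝ)^2 * ‖B - B₀‖ < (n:ℝ)^2 * (c / ((n : ℝ)^2 + 1)) + c / ((n : ℝ)^2 + 1) := by
        have h0 : (0:ℝ) ≤ (n:ℝ)^2 := by positivity
        have := mul_le_mul_of_nonneg_left hlt.le h0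
        nlinarith [norm_nonneg (B - B₀)]
      have : (n:ℝ)^2 * (c / ((n : ℝ)^2 + 1)) + c / ((n : ℝ)^2 + 1) = c := by
        field_simp
      rw [hsplit]
      nlinarith [abs_le.mp h2]
    -- scale back
    have hxu : x = ‖x‖ • u := by
      rw [hu, smul_smul, mul_inv_cancel₀ hxn, one_smul]
    have : x ⬝ᵥ (B *ᵥ x) = ‖x‖^2 * (u ⬝ᵥ (B *ᵥ u)) := by
      conv_lhs => rw [hxu]
      rw [smul_dotProduct, Matrix.mulVec_smul, dotProduct_smul]
      simp [pow_two, mul_assoc]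
    simp only [star_trivial]
    rw [this]
    positivity

lemma transpose_eq_of_isHermitian {M : Mat} (h : M.IsHermitian) : Mᵀ = M := by
  ext i j
  have := congrFun (congrFun h i) j
  simpa [Matrix.conjTranspose_apply] using this

lemma isHermitian_of_transpose_eq {M : Mat} (h : Mᵀ = M) : M.IsHermitian := by
  ext i j
  have := congrFun (congrFun h i) j
  simpa [Matrix.conjTranspose_apply] using this

lemma posDef_of_sq_posDef {M P : Mat} (hM : M.PosSemidef) (hP : P.PosDef)
    (h : M * M = P) : M.PosDef := by
  refine Matrix.PosDef.of_dotProduct_mulVec_pos hM.1 fun x hx => ?_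
  simp only [star_trivial]
  set N := CFC.sqrt M with hN
  have hNN : N * N = M := CFC.sqrt_mul_sqrt_self M hM.nonneg
  have hNh : Nᵀ = N := transpose_eq_of_isHermitian (CFC.sqrt_nonneg M).posSemidef.1
  have hMx : M *ᵥ x ≠ 0 := by
    intro h0
    have hPx : P *ᵥ x = 0 := by
      rw [← h, ← Matrix.mulVec_mulVec, h0, Matrix.mulVec_zero]
    have := hP.dotProduct_mulVec_pos hx
    simp only [star_trivial, hPx, dotProduct_zero] at this
    exact lt_irrefl 0 this
  have hNx : N *ᵥ x ≠ 0 := by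
    intro h0
    exact hMx (by rw [← hNN, ← Matrix.mulVec_mulVec, h0, Matrix.mulVec_zero])
  have key : x ⬝ᵥ (M *ᵥ x) = (N *ᵥ x) ⬝ᵥ (N *ᵥ x) := by
    rw [← hNN, ← Matrix.mulVec_mulVec, Matrix.dotProduct_mulVec x N,
      ← Matrix.mulVec_transpose, hNh]
  rw [key]
  have h1 : 0 ≤ (N *ᵥ x) ⬝ᵥ (N *ᵥ x) := Finset.sum_nonneg fun i _ => mul_self_nonneg _
  have h2 : (N *ᵥ x) ⬝ᵥ (N *ᵥ x) ≠ 0 := fun h0 => hNx (dotProduct_self_eq_zero.mp h0)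
  exact lt_of_le_of_ne h1 (Ne.symm h2)

open Classical in
/-- Smooth square root of the inverse. -/
noncomputable def sqrtInvMat (A : Mat) : Mat :=
  if h : A.PosDef then CFC.sqrt A⁻¹ else 0

lemma sqrtInvMat_mul_self {A : Mat} (h : A.PosDef) :
    sqrtInvMat A * sqrtInvMat A = A⁻¹ := by
  rw [sqrtInvMat]
  rw [dif_pos h]
  exact CFC.sqrt_mul_sqrt_self _ h.inv.posSemidef.nonneg

lemma sqrtInvMat_posDef {A : Mat} (h : A.PosDef) : (sqrtInvMat A).PosDef := by
  refine posDef_of_sq_posDef ?_ h.inv (sqrtInvMat_mul_self h)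
  rw [sqrtInvMat, dif_pos h]
  exact (CFC.sqrt_nonneg _).posSemidef

lemma contDiffWithinAt_sqrtInvMat {A₀ : Mat} (hA₀ : A₀.PosDef) :
    ContDiffWithinAt ℝ (⊤ : ℕ∞) sqrtInvMat {A : Mat | A.PosDef} A₀ := by
  set B₀ := sqrtInvMat A₀ with hB₀def
  have hB₀ : B₀.PosDef := sqrtInvMat_posDef hA₀
  have hB₀sq : B₀ * B₀ = A₀⁻¹ := sqrtInvMat_mul_self hA₀
  set sq : Mat → Mat := fun A => A * A with hsqdef
  have hfd : HasFDerivAt sq ((sylvesterEquiv hB₀ : Mat →L[ℝ] Mat)) B₀ := hasFDerivAt_sq_mat hB₀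
  have hsm : ContDiffAt ℝ (⊤ : ℕ∞) sq B₀ := contDiff_sq_mat.contDiffAt
  have hS : HasStrictFDerivAt sq ((sylvesterEquiv hB₀ : Mat →L[ℝ] Mat)) B₀ :=
    hsm.hasStrictFDerivAt' hfd (by simp)
  set g : Mat → Mat := hS.localInverse sq _ B₀ with hgdef
  have hg_cd : ContDiffAt ℝ (⊤ : ℕ∞) g (sq B₀) := hsm.to_localInverse hfd (by simp)
  have hgB₀ : g (sq B₀) = B₀ := hS.localInverse_apply_image
  have hdet : A₀.det ≠ 0 := hA₀.det_pos.ne'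
  have hinv_cd : ContDiffAt ℝ (⊤ : ℕ∞) (fun A : Mat => A⁻¹) A₀ := contDiffAt_inv_mat hdet
  have hsqB₀ : sq B₀ = A₀⁻¹ := hB₀sq
  -- the locally defined smooth candidate
  have hF : ContDiffAt ℝ (⊤ : ℕ∞) (fun A : Mat => g (A⁻¹)) A₀ := by
    refine ContDiffAt.comp A₀ ?_ hinv_cd
    rwa [hsqB₀] at hg_cd
  -- stability of positive-definiteness around B₀
  obtain ⟨ε, hε, hstab⟩ := posDef_stable hB₀
  -- left inverse on a ball
  have hleft : ∀ᶠ x in nhds B₀, g (sq x) = x := hS.eventually_left_inverse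
  obtain ⟨δ₁, hδ₁, hball⟩ := Metric.eventually_nhds_iff_ball.mp hleft
  set δ := min δ₁ ε with hδdef
  have hδ : 0 < δ := lt_min hδ₁ hε
  -- right inverse pulled back
  have hright : ∀ᶠ y in nhds (A₀⁻¹), sq (g y) = y := by
    have := hS.eventually_right_inverse
    rwa [hsqB₀] at this
  have ev2 : ∀ᶠ A in nhds A₀, sq (g (A⁻¹)) = A⁻¹ :=
    hinv_cd.continuousAt.eventually hright
  have hFA₀ : g (A₀⁻¹) = B₀ := by rw [← hsqB₀, hgB₀]
  have ev1 : ∀ᶠ A in nhds A₀, g (A⁻¹) ∈ Metric.ball B₀ δ := by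
    have hc : ContinuousAt (fun A : Mat => g (A⁻¹)) A₀ := hF.continuousAt
    have : Metric.ball B₀ δ ∈ nhds (g (A₀⁻¹)) := by
      rw [hFA₀]; exact Metric.ball_mem_nhds _ hδ
    exact hc.eventually_mem this
  have hev : ∀ᶠ A in nhdsWithin A₀ {A : Mat | A.PosDef}, sqrtInvMat A = g (A⁻¹) := by
    filter_upwards [((ev1.and ev2).filter_mono nhdsWithin_le_nhds), self_mem_nhdsWithin]
      with A hA12 hA
    obtain ⟨h1, h2⟩ := hA12
    have hA' : A.PosDef := hA
    set m := g (A⁻¹) with hm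
    -- m is symmetric: compare with its transpose via local injectivity
    have hmt_ball : mᵀ ∈ Metric.ball B₀ δ := by
      have hB₀t : B₀ᵀ = B₀ := transpose_eq_of_isHermitian hB₀.1
      have : dist mᵀ B₀ = dist m B₀ := by
        rw [dist_eq_norm, dist_eq_norm]
        conv_lhs => rw [← hB₀t]
        rw [← Matrix.transpose_sub, Matrix.norm_transpose]
      simpa [Metric.mem_ball, this] using h1
    have hAinvh : (A⁻¹)ᵀ = A⁻¹ := transpose_eq_of_isHermitian hA'.inv.1
    have hsqmt : sq mᵀ = A⁻¹ := by
      show mᵀ * mᵀ = A⁻¹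
      rw [← Matrix.transpose_mul]
      rw [show m * m = A⁻¹ from h2]
      exact hAinvh
    have hm_in : m ∈ Metric.ball B₀ δ₁ :=
      Metric.ball_subset_ball (min_le_left _ _) h1
    have hmt_in : mᵀ ∈ Metric.ball B₀ δ₁ :=
      Metric.ball_subset_ball (min_le_left _ _) hmt_ball
    have hinj : mᵀ = m := by
      have e1 : g (sq mᵀ) = mᵀ := hball _ hmt_in
      have e2 : g (sq m) = m := hball _ hm_in
      rw [hsqmt] at e1
      rw [show sq m = A⁻¹ from h2] at e2
      rw [← e1, ← e2]
    have hherm : m.IsHermitian := isHermitian_of_transpose_eq hinj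
    have hmnorm : ‖m - B₀‖ < ε := by
      have := Metric.mem_ball.mp h1
      rw [dist_eq_norm] at this
      exact lt_of_lt_of_le this (min_le_right _ _)
    have hmpos : m.PosDef := hstab m hherm hmnorm
    -- uniqueness of the positive semidefinite square root
    have huniq : m = CFC.sqrt A⁻¹ := by
      refine (CFC.sqrt_unique ?_ hmpos.posSemidef.nonneg).symm
      exact h2
    rw [sqrtInvMat, dif_pos hA', huniq]
  have hFA₀' : sqrtInvMat A₀ = g (A₀⁻¹) := by rw [hFA₀]
  exact (hF.contDiffWithinAt).congr_of_eventuallyEq hev hFA₀'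

/-- **Smooth square root of the inverse of a positive-definite matrix** (the
Bourguignon–Gauduchon trivialization step): there is a map `S` on `n × n` real matrices,
`C^∞` on the set of positive-definite matrices, such that for every positive-definite `A`
the matrix `S A` is positive definite (in particular symmetric) and `S A · S A = A⁻¹`. -/
theorem exists_smooth_sqrt_inv_posDef (n : ℕ) :
    ∃ S : Matrix (Fin n) (Fin n) ℝ → Matrix (Fin n) (Fin n) ℝ,
      ContDiffOn ℝ (⊤ : ℕ∞) S {A : Matrix (Fin n) (Fin n) ℝ | A.PosDef} ∧
      ∀ A : Matrix (Fin n) (Fin n) ℝ, A.PosDef →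
        (S A).PosDef ∧ S A * S A = A⁻¹ := by
  refine ⟨sqrtInvMat, fun A hA => contDiffWithinAt_sqrtInvMat hA,
    fun A hA => ⟨sqrtInvMat_posDef hA, sqrtInvMat_mul_self hA⟩⟩
end
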